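/- Let 𝒜 = ⟨A,R⟩ be an almost bounded structure and 𝒜^* an ultrapower of 𝒜 over an ultrafilter that is at least κ-regular for some infinite κ. For each non-diagonal element [a]_𝒟 ∈ A^* there are at least 2^κ-many elements [b_α]_𝒟 ∈ A^* (α < 2^κ) such that ⟨[b_α]_𝒟⟩^ω_{S^*} ≅_P ⟨[a]_𝒟⟩^ω_{S^*} for every α, and ⟨[b_α]_𝒟⟩^ω_{S^*} ≠ ⟨[b_β]_𝒟⟩^ω_{S^*} for α ≠ β. -/

import Mathlib

open FirstOrder Cardinal

namespace UEx

/-- Elements of infinite in- or out-degree. -/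
def RInf (R : A → A → Prop) : Set A :=
  {w | {v | R w v}.Infinite ∨ {v | R v w}.Infinite}

/-- A uniform finite bound on all in- and out-degrees. -/
def Bounded (R : A → A → Prop) : Prop :=
  ∃ n : ℕ, ∀ w : A, {v | R w v}.Finite ∧ {v | R v w}.Finite ∧
    {v | R w v}.ncard ≤ n ∧ {v | R v w}.ncard ≤ n

/-- Almost bounded: finitely many elements of infinite degree, and a uniform
finite bound on the degrees of the remaining elements. -/
def AlmostBounded (R : A → A → Prop) : Prop :=
  (RInf R).Finite ∧ ∃ n : ℕ, ∀ w ∉ RInf R,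
    {v | R w v}.ncard ≤ n ∧ {v | R v w}.ncard ≤ n

/-- P = {(s,t) ∈ R : s ∈ R∞ or t ∈ R∞}. -/
def PRel (R : A → A → Prop) (s t : A) : Prop := R s t ∧ (s ∈ RInf R ∨ t ∈ RInf R)

/-- S = R \ P. -/
def SRel (R : A → A → Prop) (s t : A) : Prop := R s t ∧ ¬(s ∈ RInf R ∨ t ∈ RInf R)

/-- The ultrafilter extension of a binary relation. -/
def ueRel (Q : A → A → Prop) (u v : Ultrafilter A) : Prop :=
  ∀ X ∈ v, {w | ∃ s ∈ X, Q w s} ∈ u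

/-- The setoid of 𝒟-a.e. equality on `I → A`. -/
def upSetoid (𝒟 : Ultrafilter I) (A : Type*) : Setoid (I → A) where
  r a b := {i | a i = b i} ∈ 𝒟
  iseqv := by
    refine ⟨fun a => ?_, fun {a b} h => ?_, fun {a b c} h1 h2 => ?_⟩
    · have : {i | a i = a i} = (Set.univ : Set I) := by simp
      rw [this]
      exact Filter.univ_mem
    · exact Filter.mem_of_superset h fun i hi => (hi : _ = _).symm
    · exact Filter.mem_of_superset (Filter.inter_mem h1 h2) fun i hi =>
        (hi.1 : _ = _).trans hi.2

/-- The ultrapower of `A` modulo the ultrafilter `𝒟`. -/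
def UP (𝒟 : Ultrafilter I) (A : Type*) : Type _ := Quotient (upSetoid 𝒟 A)

/-- The diagonal embedding into the ultrapower. -/
def diag (𝒟 : Ultrafilter I) (a : A) : UP 𝒟 A := Quotient.mk (upSetoid 𝒟 A) fun _ => a

/-- The relation on the ultrapower given by Łoś's theorem. -/
def upRel (𝒟 : Ultrafilter I) (Q : A → A → Prop) : UP 𝒟 A → UP 𝒟 A → Prop :=
  Quotient.lift₂ (fun a b => {i | Q (a i) (b i)} ∈ 𝒟) <| by
    intro a b a' b' ha hb
    have ha' : {i | a i = a' i} ∈ 𝒟 := ha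
    have hb' : {i | b i = b' i} ∈ 𝒟 := hb
    refine propext ⟨fun h => ?_, fun h => ?_⟩
    · refine Filter.mem_of_superset (Filter.inter_mem (Filter.inter_mem h ha') hb') ?_
      rintro i ⟨⟨h1, h2⟩, h3⟩
      simp only [Set.mem_setOf_eq] at *
      rw [← h2, ← h3]; exact h1
    · refine Filter.mem_of_superset (Filter.inter_mem (Filter.inter_mem h ha') hb') ?_
      rintro i ⟨⟨h1, h2⟩, h3⟩
      simp only [Set.mem_setOf_eq] at *
      rw [h2, h3]; exact h1

/-- `𝒟` is `κ`-regular. -/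
def IsRegular (𝒟 : Ultrafilter I) (κ : Cardinal) : Prop :=
  ∃ E : Set (Set I), (∀ X ∈ E, X ∈ 𝒟) ∧ #E = κ ∧ ∀ i : I, {X ∈ E | i ∈ X}.Finite

/-- The set of elements reachable from `w` in at most `n` steps along `Q ∪ Q⁻¹`. -/
def nbhd (Q : B → B → Prop) (w : B) : ℕ → Set B
  | 0 => {w}
  | n + 1 => nbhd Q w n ∪ {v | ∃ x ∈ nbhd Q w n, Q x v ∨ Q v x}

/-- The ω-neighborhood of `w` along `Q ∪ Q⁻¹`. -/
def onbhd (Q : B → B → Prop) (w : B) : Set B := ⋃ n, nbhd Q w n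

/-- A `P`-isomorphism between the substructure of `B` on `sB` (with relation `SB`,
base point `b`) and the substructure of `C` on `sC` (with relation `SC`, base point `c`),
compatible with the `P`-connections to the elements of `Rinf`. -/
def IsPIsoOn {A B C : Type*} (Rinf : Set A)
    (SB : B → B → Prop) (PBr : B → A → Prop) (PBl : A → B → Prop)
    (SC : C → C → Prop) (PCr : C → A → Prop) (PCl : A → C → Prop)
    (sB : Set B) (sC : Set C) (b : B) (c : C) : Prop :=
  ∃ f : sB ≃ sC,
    (∀ (hb : b ∈ sB) (hc : c ∈ sC), f ⟨b, hb⟩ = ⟨c, hc⟩) ∧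
    (∀ x y : sB, SB x y ↔ SC (f x) (f y)) ∧
    (∀ x : sB, ∀ t ∈ Rinf, (PBr x t ↔ PCr (f x) t) ∧ (PBl t x ↔ PCl t (f x)))

/-- `P`-isomorphism of neighborhoods, both taken inside the ultrafilter extension
(elements `t` of `R_∞` are identified with the principal ultrafilters `π_t`). -/
def PIsoUeUe {A : Type*} (R : A → A → Prop)
    (sB sC : Set (Ultrafilter A)) (b c : Ultrafilter A) : Prop :=
  IsPIsoOn (RInf R)
    (ueRel (SRel R)) (fun x t => ueRel (PRel R) x (pure t)) (fun t x => ueRel (PRel R) (pure t) x)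
    (ueRel (SRel R)) (fun x t => ueRel (PRel R) x (pure t)) (fun t x => ueRel (PRel R) (pure t) x)
    sB sC b c

/-- `P`-isomorphism of a neighborhood in the ultrafilter extension with
a neighborhood in the original structure. -/
def PIsoUeA {A : Type*} (R : A → A → Prop)
    (sB : Set (Ultrafilter A)) (sC : Set A) (b : Ultrafilter A) (c : A) : Prop :=
  IsPIsoOn (RInf R)
    (ueRel (SRel R)) (fun x t => ueRel (PRel R) x (pure t)) (fun t x => ueRel (PRel R) (pure t) x)
    (SRel R) (fun x t => PRel R x t) (fun t x => PRel R t x)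
    sB sC b c

/-- `P`-isomorphism of a neighborhood in the ultrafilter extension with
a neighborhood in the ultrapower (elements `t` of `R_∞` are identified with
the principal ultrafilter `π_t`, resp. with the diagonal image of `t`). -/
def PIsoUeUp {A I : Type*} (R : A → A → Prop) (𝒟 : Ultrafilter I)
    (sB : Set (Ultrafilter A)) (sC : Set (UP 𝒟 A)) (b : Ultrafilter A) (c : UP 𝒟 A) : Prop :=
  IsPIsoOn (RInf R)
    (ueRel (SRel R)) (fun x t => ueRel (PRel R) x (pure t)) (fun t x => ueRel (PRel R) (pure t) x)
    (upRel 𝒟 (SRel R)) (fun x t => upRel 𝒟 (PRel R) x (diag 𝒟 t)) (fun t x => upRel 𝒟 (PRel R) (diag 𝒟 t) x)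
    sB sC b c

/-- `P`-isomorphism of neighborhoods, both taken inside the ultrapower. -/
def PIsoUpUp {A I : Type*} (R : A → A → Prop) (𝒟 : Ultrafilter I)
    (sB sC : Set (UP 𝒟 A)) (b c : UP 𝒟 A) : Prop :=
  IsPIsoOn (RInf R)
    (upRel 𝒟 (SRel R)) (fun x t => upRel 𝒟 (PRel R) x (diag 𝒟 t)) (fun t x => upRel 𝒟 (PRel R) (diag 𝒟 t) x)
    (upRel 𝒟 (SRel R)) (fun x t => upRel 𝒟 (PRel R) x (diag 𝒟 t)) (fun t x => upRel 𝒟 (PRel R) (diag 𝒟 t) x)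
    sB sC b c
section Aux
open Set

variable {A B I : Type*}

lemma mem_nbhd_self (Q : B → B → Prop) (w : B) (m : ℕ) : w ∈ nbhd Q w m := by
  induction m with
  | zero => exact rfl
  | succ m ih => exact Or.inl ih

lemma nbhd_mono (Q : B → B → Prop) (w : B) {m m' : ℕ} (h : m ≤ m') :
    nbhd Q w m ⊆ nbhd Q w m' := by
  induction h with
  | refl => exact subset_rfl
  | step _ ih => exact fun x hx => Or.inl (ih hx)

lemma nbhd_trans {Q : B → B → Prop} {w x : B} {k : ℕ} (hx : x ∈ nbhd Q w k) (m : ℕ) :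
    nbhd Q x m ⊆ nbhd Q w (k + m) := by
  induction m with
  | zero => intro y hy; cases hy; exact hx
  | succ m ih =>
    rintro y (hy | ⟨z, hz, hzy⟩)
    · exact nbhd_mono Q w (Nat.le_succ _) (ih hy)
    · exact Or.inr ⟨z, ih hz, hzy⟩

lemma nbhd_symm {Q : B → B → Prop} {w v : B} {m : ℕ} (h : v ∈ nbhd Q w m) :
    w ∈ nbhd Q v m := by
  induction m generalizing v with
  | zero => cases h; exact rfl
  | succ m ih =>
    rcases h with h | ⟨x, hx, hxv⟩
    · exact Or.inl (ih h)
    · have hwx : w ∈ nbhd Q x m := ih hx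
      have hxv' : x ∈ nbhd Q v 1 := Or.inr ⟨v, rfl, hxv.symm⟩
      exact Nat.add_comm 1 m ▸ nbhd_trans hxv' m hwx

lemma mem_onbhd_self (Q : B → B → Prop) (w : B) : w ∈ onbhd Q w :=
  Set.mem_iUnion.2 ⟨0, rfl⟩

end Aux

section Aux2
open Set

variable {A B I : Type*}

lemma SRel.not_inf_left {R : A → A → Prop} {x v : A} (h : SRel R x v) : x ∉ RInf R :=
  fun hx => h.2 (Or.inl hx)

lemma SRel.not_inf_right {R : A → A → Prop} {x v : A} (h : SRel R x v) : v ∉ RInf R :=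
  fun hv => h.2 (Or.inr hv)

/-- The set of S-neighbors of a point. -/
def sEdge (R : A → A → Prop) (x : A) : Set A := {v | SRel R x v ∨ SRel R v x}

lemma sEdge_subset {R : A → A → Prop} (x : A) (hx : x ∉ RInf R → True) :
    sEdge R x ⊆ {v | R x v} ∪ {v | R v x} := by
  rintro v (h | h)
  · exact Or.inl h.1
  · exact Or.inr h.1

lemma notInf_finite {R : A → A → Prop} {x : A} (hx : x ∉ RInf R) :
    {v | R x v}.Finite ∧ {v | R v x}.Finite := by
  rw [RInf, Set.mem_setOf_eq, not_or] at hx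
  exact ⟨Set.not_infinite.1 hx.1, Set.not_infinite.1 hx.2⟩

lemma sEdge_finite (R : A → A → Prop) (x : A) : (sEdge R x).Finite := by
  by_cases hx : x ∈ RInf R
  · have : sEdge R x = ∅ := by
      ext v
      simp only [sEdge, Set.mem_setOf_eq, Set.mem_empty_iff_false, iff_false, not_or]
      exact ⟨fun hs => hs.not_inf_left hx, fun hs => hs.not_inf_right hx⟩
    rw [this]; exact Set.finite_empty
  · exact (((notInf_finite hx).1.union (notInf_finite hx).2).subset (sEdge_subset x (fun _ => trivial)))

lemma sEdge_card {R : A → A → Prop} {n : ℕ}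
    (hn : ∀ w ∉ RInf R, {v | R w v}.ncard ≤ n ∧ {v | R v w}.ncard ≤ n) (x : A) :
    (sEdge R x).ncard ≤ 2 * n := by
  by_cases hx : x ∈ RInf R
  · have : sEdge R x = ∅ := by
      ext v
      simp only [sEdge, Set.mem_setOf_eq, Set.mem_empty_iff_false, iff_false, not_or]
      exact ⟨fun hs => hs.not_inf_left hx, fun hs => hs.not_inf_right hx⟩
    rw [this]; simp
  · calc (sEdge R x).ncard ≤ ({v | R x v} ∪ {v | R v x}).ncard :=
          Set.ncard_le_ncard (sEdge_subset x (fun _ => trivial))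
            ((notInf_finite hx).1.union (notInf_finite hx).2)
      _ ≤ {v | R x v}.ncard + {v | R v x}.ncard := Set.ncard_union_le _ _
      _ ≤ n + n := Nat.add_le_add (hn x hx).1 (hn x hx).2
      _ = 2 * n := (Nat.two_mul n).symm

lemma biUnion_card_le {s : Set B} (hs : s.Finite) (f : B → Set B) (k : ℕ)
    (hf : ∀ x, (f x).Finite) (hk : ∀ x, (f x).ncard ≤ k) :
    (⋃ x ∈ s, f x).Finite ∧ (⋃ x ∈ s, f x).ncard ≤ s.ncard * k := by
  refine Set.Finite.induction_on
    (motive := fun s _ => (⋃ x ∈ s, f x).Finite ∧ (⋃ x ∈ s, f x).ncard ≤ s.ncard * k) s hs ?_ ?_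
  · simp
  · intro a s ha hsf ih
    have heq : (⋃ x ∈ insert a s, f x) = f a ∪ ⋃ x ∈ s, f x := by
      simp [Set.biUnion_insert]
    constructor
    · rw [heq]; exact (hf a).union ih.1
    · rw [heq]
      calc (f a ∪ ⋃ x ∈ s, f x).ncard ≤ (f a).ncard + (⋃ x ∈ s, f x).ncard :=
            Set.ncard_union_le _ _
        _ ≤ k + s.ncard * k := Nat.add_le_add (hk a) ih.2
        _ ≤ (insert a s).ncard * k := by
            rw [Set.ncard_insert_of_notMem ha hsf]
            ring_nf
            omega

lemma nbhd_finite_card {R : A → A → Prop} {n : ℕ}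
    (hn : ∀ w ∉ RInf R, {v | R w v}.ncard ≤ n ∧ {v | R v w}.ncard ≤ n) (w : A) (m : ℕ) :
    (nbhd (SRel R) w m).Finite ∧ (nbhd (SRel R) w m).ncard ≤ (2 * n + 1) ^ m := by
  induction m with
  | zero =>
    constructor
    · exact Set.finite_singleton w
    · simp [nbhd]
  | succ m ih =>
    have heq : nbhd (SRel R) w (m + 1) =
        nbhd (SRel R) w m ∪ ⋃ x ∈ nbhd (SRel R) w m, sEdge R x := by
      ext v
      simp only [nbhd, Set.mem_union, Set.mem_iUnion, Set.mem_setOf_eq, sEdge]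
      constructor
      · rintro (hv | ⟨x, hx, he⟩)
        · exact Or.inl hv
        · exact Or.inr ⟨x, hx, he⟩
      · rintro (hv | ⟨x, hx, he⟩)
        · exact Or.inl hv
        · exact Or.inr ⟨x, hx, he⟩
    have hbu := biUnion_card_le ih.1 (sEdge R) (2 * n) (sEdge_finite R) (sEdge_card hn)
    constructor
    · rw [heq]; exact ih.1.union hbu.1
    · rw [heq]
      calc (nbhd (SRel R) w m ∪ ⋃ x ∈ nbhd (SRel R) w m, sEdge R x).ncard
          ≤ (nbhd (SRel R) w m).ncard + (⋃ x ∈ nbhd (SRel R) w m, sEdge R x).ncard :=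
            Set.ncard_union_le _ _
        _ ≤ (2 * n + 1) ^ m + (2 * n + 1) ^ m * (2 * n) := by
            have := hbu.2
            have h2 : (nbhd (SRel R) w m).ncard * (2 * n) ≤ (2 * n + 1) ^ m * (2 * n) :=
              Nat.mul_le_mul_right _ ih.2
            omega
        _ = (2 * n + 1) ^ (m + 1) := by ring

end Aux2

section Aux3
open Set

variable {A I : Type*}

/-- Decorated isomorphism of `m`-neighborhoods. -/
def NIso (R : A → A → Prop) (m : ℕ) (w w' : A) : Prop :=
  ∃ g : (nbhd (SRel R) w m : Set A) ≃ (nbhd (SRel R) w' m : Set A),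
    (g ⟨w, mem_nbhd_self _ _ _⟩ : A) = w' ∧
    (∀ x y : (nbhd (SRel R) w m : Set A), (SRel R x y ↔ SRel R (g x) (g y))) ∧
    (∀ x : (nbhd (SRel R) w m : Set A), ∀ t ∈ RInf R,
      (PRel R x t ↔ PRel R (g x) t) ∧ (PRel R t x ↔ PRel R t (g x)))

lemma iso_maps_nbhd {Q : A → A → Prop} {w w' : A} {m : ℕ}
    (g : (nbhd Q w m : Set A) ≃ (nbhd Q w' m : Set A))
    (hbase : (g ⟨w, mem_nbhd_self _ _ _⟩ : A) = w')
    (hedge : ∀ x y : (nbhd Q w m : Set A), Q x y ↔ Q (g x) (g y)) :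
    ∀ k, k ≤ m → ∀ x : (nbhd Q w m : Set A), (x : A) ∈ nbhd Q w k →
      (g x : A) ∈ nbhd Q w' k := by
  intro k
  induction k with
  | zero =>
    intro _ x hx
    have hxw : x = ⟨w, mem_nbhd_self _ _ _⟩ := Subtype.ext hx
    rw [hxw, hbase]; rfl
  | succ k ih =>
    intro hk x hx
    rcases hx with hx | ⟨z, hz, hzx⟩
    · exact Or.inl (ih (Nat.le_of_succ_le hk) x hx)
    · set z' : (nbhd Q w m : Set A) := ⟨z, nbhd_mono Q w (Nat.le_of_succ_le hk) hz⟩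
      have h1 : (g z' : A) ∈ nbhd Q w' k := ih (Nat.le_of_succ_le hk) z' hz
      refine Or.inr ⟨g z', h1, ?_⟩
      rcases hzx with hq | hq
      · exact Or.inl ((hedge z' x).1 hq)
      · exact Or.inr ((hedge x z').1 hq)

lemma NIso.symm {R : A → A → Prop} {m : ℕ} {w w' : A} (h : NIso R m w w') : NIso R m w' w := by
  obtain ⟨g, hbase, hedge, hdec⟩ := h
  have hbase' : g ⟨w, mem_nbhd_self _ _ _⟩ = ⟨w', mem_nbhd_self _ _ _⟩ := Subtype.ext hbase
  refine ⟨g.symm, ?_, ?_, ?_⟩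
  · have := g.symm_apply_apply ⟨w, mem_nbhd_self _ _ _⟩
    rw [hbase'] at this
    rw [this]
  · intro x y
    have := hedge (g.symm x) (g.symm y)
    rw [g.apply_symm_apply, g.apply_symm_apply] at this
    exact this.symm
  · intro x t ht
    have := hdec (g.symm x) t ht
    rw [g.apply_symm_apply] at this
    exact ⟨this.1.symm, this.2.symm⟩

lemma exists_ae_niso {R : A → A → Prop} {n : ℕ}
    (hn : ∀ w ∉ RInf R, {v | R w v}.ncard ≤ n ∧ {v | R v w}.ncard ≤ n)
    (hRfin : (RInf R).Finite) (𝒟 : Ultrafilter I) (a : I → A) (m : ℕ) :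
    ∃ X ∈ 𝒟, ∀ i ∈ X, ∀ j ∈ X, NIso R m (a i) (a j) := by
  classical
  letI := hRfin.to_subtype
  set N := (2 * n + 1) ^ m with hN
  have hemb : ∀ w : A, Nonempty ((nbhd (SRel R) w m : Set A) ↪ Fin N) := by
    intro w
    have hfin := (nbhd_finite_card hn w m).1
    letI := hfin.fintype
    apply Function.Embedding.nonempty_of_card_le
    rw [Fintype.card_fin, ← Set.toFinset_card, ← Set.ncard_eq_toFinset_card']
    exact (nbhd_finite_card hn w m).2
  let ι : ∀ w : A, (nbhd (SRel R) w m : Set A) ↪ Fin N := fun w => (hemb w).some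
  let code : A → (Fin N → Prop) × (Fin N → Fin N → Prop) × Fin N ×
      (Fin N → ↥(RInf R) → Prop × Prop) := fun w =>
    (fun p => p ∈ Set.range (ι w),
     fun p q => ∃ x y, ι w x = p ∧ ι w y = q ∧ SRel R (x : A) (y : A),
     ι w ⟨w, mem_nbhd_self _ _ _⟩,
     fun p t => ((∃ x, ι w x = p ∧ PRel R (x : A) (t : A)),
                 (∃ x, ι w x = p ∧ PRel R (t : A) (x : A))))
  obtain ⟨c, hc⟩ := Ultrafilter.eq_pure_of_finite (Ultrafilter.map (fun i => code (a i)) 𝒟)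
  refine ⟨{i | code (a i) = c}, ?_, ?_⟩
  · have hmem : {c} ∈ (pure c : Ultrafilter _) := rfl
    rw [← hc, Ultrafilter.mem_map] at hmem
    exact hmem
  · intro i hi j hj
    have heq : code (a i) = code (a j) := hi.trans hj.symm
    set w := a i
    set w' := a j
    have h1 : Set.range (ι w) = Set.range (ι w') := by
      have := congrArg (fun z => z.1) heq
      exact Set.ext fun p => iff_of_eq (congrFun this p)
    have h2 : ∀ p q, (∃ x y, ι w x = p ∧ ι w y = q ∧ SRel R (x : A) (y : A)) =
        (∃ x y, ι w' x = p ∧ ι w' y = q ∧ SRel R (x : A) (y : A)) := by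
      intro p q
      have := congrArg (fun z => z.2.1) heq
      exact congrFun (congrFun this p) q
    have h3 : ι w ⟨w, mem_nbhd_self _ _ _⟩ = ι w' ⟨w', mem_nbhd_self _ _ _⟩ :=
      congrArg (fun z => z.2.2.1) heq
    have h4 : ∀ p (t : ↥(RInf R)),
        ((∃ x, ι w x = p ∧ PRel R (x : A) (t : A)), (∃ x, ι w x = p ∧ PRel R (t : A) (x : A))) =
        ((∃ x, ι w' x = p ∧ PRel R (x : A) (t : A)), (∃ x, ι w' x = p ∧ PRel R (t : A) (x : A))) := by
      intro p t
      have := congrArg (fun z => z.2.2.2) heq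
      exact congrFun (congrFun this p) t
    -- build the equiv
    let g := (Equiv.ofInjective _ (ι w).injective).trans
      ((Equiv.setCongr h1).trans (Equiv.ofInjective _ (ι w').injective).symm)
    have hkey : ∀ x, ι w' (g x) = ι w x := by
      intro x
      calc ι w' (g x)
          = ((Equiv.setCongr h1) ((Equiv.ofInjective _ (ι w).injective) x) : Fin N) :=
            Equiv.apply_ofInjective_symm (ι w').injective _
        _ = ι w x := by simp
    refine ⟨g, ?_, ?_, ?_⟩
    · have : ι w' (g ⟨w, mem_nbhd_self _ _ _⟩) = ι w' ⟨w', mem_nbhd_self _ _ _⟩ := by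
        rw [hkey, h3]
      have := (ι w').injective this
      rw [this]
    · intro x y
      have hcode := h2 (ι w x) (ι w y)
      constructor
      · intro hs
        have : ∃ x' y', ι w' x' = ι w x ∧ ι w' y' = ι w y ∧ SRel R (x' : A) (y' : A) := by
          rw [← hcode]; exact ⟨x, y, rfl, rfl, hs⟩
        obtain ⟨x', y', hx', hy', hs'⟩ := this
        have hx'' : x' = g x := (ι w').injective (hx'.trans (hkey x).symm)
        have hy'' : y' = g y := (ι w').injective (hy'.trans (hkey y).symm)
        rw [← hx'', ← hy'']; exact hs'
      · intro hs
        have : ∃ x' y', ι w x' = ι w x ∧ ι w y' = ι w y ∧ SRel R (x' : A) (y' : A) := by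
          rw [hcode]; exact ⟨g x, g y, hkey x, hkey y, hs⟩
        obtain ⟨x', y', hx', hy', hs'⟩ := this
        have hx'' : x' = x := (ι w).injective hx'
        have hy'' : y' = y := (ι w).injective hy'
        rw [← hx'', ← hy'']; exact hs'
    · intro x t ht
      have hcode := h4 (ι w x) ⟨t, ht⟩
      have hc1 : (∃ x', ι w x' = ι w x ∧ PRel R (x' : A) t) ↔
          (∃ x', ι w' x' = ι w x ∧ PRel R (x' : A) t) :=
        iff_of_eq (congrArg Prod.fst hcode)
      have hc2 : (∃ x', ι w x' = ι w x ∧ PRel R t (x' : A)) ↔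
          (∃ x', ι w' x' = ι w x ∧ PRel R t (x' : A)) :=
        iff_of_eq (congrArg Prod.snd hcode)
      constructor
      · constructor
        · intro hs
          obtain ⟨x', hx', hs'⟩ := hc1.1 ⟨x, rfl, hs⟩
          rwa [(ι w').injective (hx'.trans (hkey x).symm)] at hs'
        · intro hs
          obtain ⟨x', hx', hs'⟩ := hc1.2 ⟨g x, hkey x, hs⟩
          rwa [(ι w).injective hx'] at hs'
      · constructor
        · intro hs
          obtain ⟨x', hx', hs'⟩ := hc2.1 ⟨x, rfl, hs⟩
          rwa [(ι w').injective (hx'.trans (hkey x).symm)] at hs'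
        · intro hs
          obtain ⟨x', hx', hs'⟩ := hc2.2 ⟨g x, hkey x, hs⟩
          rwa [(ι w).injective hx'] at hs'

end Aux3

section Aux4
open Set

variable {A I : Type*}

lemma up_eq_iff' {𝒟 : Ultrafilter I} {c c' : I → A} :
    Quotient.mk (upSetoid 𝒟 A) c = Quotient.mk (upSetoid 𝒟 A) c' ↔ {i | c i = c' i} ∈ 𝒟 :=
  ⟨fun h => Quotient.exact h, fun h => @Quotient.sound _ (upSetoid 𝒟 A) _ _ h⟩

lemma nondiag_infinite {𝒟 : Ultrafilter I} {a : I → A}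
    (ha : Quotient.mk (upSetoid 𝒟 A) a ∉ Set.range (diag 𝒟 : A → UP 𝒟 A))
    {X : Set I} (hX : X ∈ 𝒟) : (a '' X).Infinite := by
  by_contra hfin
  rw [Set.not_infinite] at hfin
  have hmem : a '' X ∈ Ultrafilter.map a 𝒟 := by
    rw [Ultrafilter.mem_map]
    exact Filter.mem_of_superset hX (Set.subset_preimage_image a X)
  obtain ⟨v, _, hpure⟩ := Ultrafilter.eq_pure_of_finite_mem hfin hmem
  refine ha ⟨v, ?_⟩
  have hv : {i | a i = v} ∈ 𝒟 := by
    have : {v} ∈ Ultrafilter.map a 𝒟 := by rw [hpure]; exact rfl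
    rw [Ultrafilter.mem_map] at this
    exact this
  exact (up_eq_iff' (c := fun _ => v) (c' := a)).2
    (Filter.mem_of_superset hv fun i hi => (hi : a i = v).symm)

lemma exists_separated {Q : A → A → Prop} {m : ℕ} (hfin : ∀ w, (nbhd Q w m).Finite)
    {W : Set A} (hW : W.Infinite) :
    ∀ k : ℕ, ∃ f : Fin k → A, (∀ s, f s ∈ W) ∧
      ∀ s s', s ≠ s' → f s' ∉ nbhd Q (f s) m := by
  intro k
  induction k with
  | zero => exact ⟨fun s => s.elim0, fun s => s.elim0, fun s => s.elim0⟩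
  | succ k ih =>
    obtain ⟨f, hfW, hsep⟩ := ih
    have hU : (⋃ s : Fin k, nbhd Q (f s) m).Finite :=
      Set.finite_iUnion fun s => hfin (f s)
    obtain ⟨w, hwW, hwU⟩ := (hW.diff hU).nonempty
    refine ⟨Fin.cons w f, ?_, ?_⟩
    · intro s
      refine Fin.cases ?_ ?_ s
      · exact hwW
      · intro s'; exact hfW s'
    · intro s s'
      induction s using Fin.cases with
      | zero =>
        induction s' using Fin.cases with
        | zero => intro hne _; exact hne rfl
        | succ p' =>
          intro _ hmem
          simp only [Fin.cons_zero, Fin.cons_succ] at hmem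
          exact hwU (Set.mem_iUnion.2 ⟨p', nbhd_symm hmem⟩)
      | succ p =>
        induction s' using Fin.cases with
        | zero =>
          intro _ hmem
          simp only [Fin.cons_zero, Fin.cons_succ] at hmem
          exact hwU (Set.mem_iUnion.2 ⟨p, hmem⟩)
        | succ p' =>
          intro hne hmem
          simp only [Fin.cons_succ] at hmem
          exact hsep p p' (fun hpp => hne (congrArg Fin.succ hpp)) hmem

end Aux4

section Aux5
open Set

variable {A : Type u} {I : Type u}

lemma up_eq_iff {𝒟 : Ultrafilter I} {c c' : I → A} :
    Quotient.mk (upSetoid 𝒟 A) c = Quotient.mk (upSetoid 𝒟 A) c' ↔ {i | c i = c' i} ∈ 𝒟 :=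
  up_eq_iff'

lemma upRel_mk {𝒟 : Ultrafilter I} {Q : A → A → Prop} {c c' : I → A} :
    upRel 𝒟 Q (Quotient.mk (upSetoid 𝒟 A) c) (Quotient.mk (upSetoid 𝒟 A) c') ↔
      {i | Q (c i) (c' i)} ∈ 𝒟 :=
  Iff.rfl

lemma mem_nbhd_up {𝒟 : Ultrafilter I} {Q : A → A → Prop} {b : I → A} {m : ℕ} :
    ∀ x ∈ nbhd (upRel 𝒟 Q) (Quotient.mk (upSetoid 𝒟 A) b) m, ∀ c : I → A,
      Quotient.mk (upSetoid 𝒟 A) c = x → {i | c i ∈ nbhd Q (b i) m} ∈ 𝒟 := by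
  induction m with
  | zero =>
    intro x hx c hc
    have : Quotient.mk (upSetoid 𝒟 A) c = Quotient.mk (upSetoid 𝒟 A) b := by
      rw [hc]; exact hx
    exact up_eq_iff.1 this
  | succ m ih =>
    rintro x (hx | ⟨y, hy, hedge⟩) c hc
    · exact Filter.mem_of_superset (ih x hx c hc) fun i hi => Or.inl hi
    · obtain ⟨d, hd⟩ := Quotient.exists_rep y
      have hdm : {i | d i ∈ nbhd Q (b i) m} ∈ 𝒟 := ih y hy d hd
      rcases hedge with hq | hq
      · rw [← hd, ← hc] at hq
        have hq' : {i | Q (d i) (c i)} ∈ 𝒟 := hq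
        refine Filter.mem_of_superset (Filter.inter_mem hdm hq') ?_
        rintro i ⟨h1, h2⟩
        exact Or.inr ⟨d i, h1, Or.inl h2⟩
      · rw [← hd, ← hc] at hq
        have hq' : {i | Q (c i) (d i)} ∈ 𝒟 := hq
        refine Filter.mem_of_superset (Filter.inter_mem hdm hq') ?_
        rintro i ⟨h1, h2⟩
        exact Or.inr ⟨d i, h1, Or.inr h2⟩

lemma up_mem_nbhd {𝒟 : Ultrafilter I} {Q : A → A → Prop} {b : I → A} {m : ℕ} :
    ∀ c : I → A, {i | c i ∈ nbhd Q (b i) m} ∈ 𝒟 →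
      Quotient.mk (upSetoid 𝒟 A) c ∈ nbhd (upRel 𝒟 Q) (Quotient.mk (upSetoid 𝒟 A) b) m := by
  classical
  induction m with
  | zero =>
    intro c hc
    exact up_eq_iff.2 hc
  | succ m ih =>
    intro c hc
    have hsplit : {i | c i ∈ nbhd Q (b i) m} ∪
        {i | ∃ x ∈ nbhd Q (b i) m, Q x (c i) ∨ Q (c i) x} ∈ 𝒟 :=
      Filter.mem_of_superset hc fun i hi => hi
    rcases Ultrafilter.union_mem_iff.1 hsplit with h1 | h2
    · exact Or.inl (ih c h1)
    · set d : I → A := fun i =>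
        if hh : ∃ x, x ∈ nbhd Q (b i) m ∧ (Q x (c i) ∨ Q (c i) x) then hh.choose else b i
        with hd
      have hdprop : ∀ i ∈ {i | ∃ x ∈ nbhd Q (b i) m, Q x (c i) ∨ Q (c i) x},
          d i ∈ nbhd Q (b i) m ∧ (Q (d i) (c i) ∨ Q (c i) (d i)) := by
        intro i hi
        obtain ⟨x, hx1, hx2⟩ := hi
        have hex : ∃ x, x ∈ nbhd Q (b i) m ∧ (Q x (c i) ∨ Q (c i) x) := ⟨x, hx1, hx2⟩
        rw [hd]
        simp only [hex, dif_pos]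
        exact ⟨hex.choose_spec.1, hex.choose_spec.2⟩
      have hVV : {i | d i ∈ nbhd Q (b i) m ∧ Q (d i) (c i)} ∪
          {i | d i ∈ nbhd Q (b i) m ∧ Q (c i) (d i)} ∈ 𝒟 := by
        refine Filter.mem_of_superset h2 fun i hi => ?_
        obtain ⟨hd1, hd2⟩ := hdprop i hi
        rcases hd2 with hq | hq
        · exact Or.inl ⟨hd1, hq⟩
        · exact Or.inr ⟨hd1, hq⟩
      rcases Ultrafilter.union_mem_iff.1 hVV with hV | hV
      · refine Or.inr ⟨Quotient.mk (upSetoid 𝒟 A) d,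
          ih d (Filter.mem_of_superset hV fun i hi => hi.1), Or.inl ?_⟩
        exact Filter.mem_of_superset hV fun i hi => hi.2
      · refine Or.inr ⟨Quotient.mk (upSetoid 𝒟 A) d,
          ih d (Filter.mem_of_superset hV fun i hi => hi.1), Or.inr ?_⟩
        exact Filter.mem_of_superset hV fun i hi => hi.2

lemma up_mem_onbhd_iff {𝒟 : Ultrafilter I} {Q : A → A → Prop} {b c : I → A} :
    Quotient.mk (upSetoid 𝒟 A) c ∈ onbhd (upRel 𝒟 Q) (Quotient.mk (upSetoid 𝒟 A) b) ↔
      ∃ m, {i | c i ∈ nbhd Q (b i) m} ∈ 𝒟 := by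
  refine Set.mem_iUnion.trans ?_
  constructor
  · rintro ⟨m, hm⟩
    exact ⟨m, mem_nbhd_up _ hm c rfl⟩
  · rintro ⟨m, hm⟩
    exact ⟨m, up_mem_nbhd c hm⟩

end Aux5

section Aux6
open Set

variable {A : Type u} {I : Type u}

lemma piso_of_pointwise (R : A → A → Prop) (𝒟 : Ultrafilter I)
    (u v : I → A) (e : I → ℕ) (G0 : Set I)
    (hG : ∀ m : ℕ, {i | i ∈ G0 ∧ m ≤ e i} ∈ 𝒟)
    (hiso : ∀ i ∈ G0, NIso R (e i) (u i) (v i)) :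
    PIsoUpUp R 𝒟 (onbhd (upRel 𝒟 (SRel R)) (Quotient.mk (upSetoid 𝒟 A) v))
      (onbhd (upRel 𝒟 (SRel R)) (Quotient.mk (upSetoid 𝒟 A) u))
      (Quotient.mk (upSetoid 𝒟 A) v) (Quotient.mk (upSetoid 𝒟 A) u) := by
  classical
  set S := SRel R with hS
  -- extract pointwise maps with all needed properties
  have H : ∀ i, ∃ φ ψ : A → A, i ∈ G0 →
      (φ (u i) = v i) ∧
      (∀ k ≤ e i, ∀ x ∈ nbhd S (u i) k, φ x ∈ nbhd S (v i) k) ∧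
      (∀ x, ∀ hx : x ∈ nbhd S (u i) (e i), ∀ y, ∀ hy : y ∈ nbhd S (u i) (e i),
        (S x y ↔ S (φ x) (φ y))) ∧
      (∀ x ∈ nbhd S (u i) (e i), ∀ t ∈ RInf R,
        (PRel R x t ↔ PRel R (φ x) t) ∧ (PRel R t x ↔ PRel R t (φ x))) ∧
      (∀ x ∈ nbhd S (u i) (e i), ψ (φ x) = x) ∧
      (ψ (v i) = u i) ∧
      (∀ k ≤ e i, ∀ y ∈ nbhd S (v i) k, ψ y ∈ nbhd S (u i) k) ∧
      (∀ y ∈ nbhd S (v i) (e i), φ (ψ y) = y) := by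
    intro i
    by_cases hi : i ∈ G0
    · obtain ⟨g, hbase, hedge, hdec⟩ := hiso i hi
      have hbase' : g ⟨u i, mem_nbhd_self _ _ _⟩ = ⟨v i, mem_nbhd_self _ _ _⟩ :=
        Subtype.ext hbase
      have hbase_s : ((g.symm ⟨v i, mem_nbhd_self _ _ _⟩ : _) : A) = u i := by
        have := g.symm_apply_apply ⟨u i, mem_nbhd_self _ _ _⟩
        rw [hbase'] at this
        rw [this]
      have hedge_s : ∀ x y : (nbhd S (v i) (e i) : Set A),
          S x y ↔ S (g.symm x) (g.symm y) := by
        intro x y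
        have := hedge (g.symm x) (g.symm y)
        rw [g.apply_symm_apply, g.apply_symm_apply] at this
        exact this.symm
      refine ⟨fun x => if hx : x ∈ nbhd S (u i) (e i) then (g ⟨x, hx⟩ : A) else x,
              fun y => if hy : y ∈ nbhd S (v i) (e i) then (g.symm ⟨y, hy⟩ : A) else y,
              fun _ => ?_⟩
      refine ⟨?_, ?_, ?_, ?_, ?_, ?_, ?_, ?_⟩
      · beta_reduce
        rw [dif_pos (mem_nbhd_self _ _ _)]
        exact hbase
      · intro k hk x hx
        have hxe : x ∈ nbhd S (u i) (e i) := nbhd_mono _ _ hk hx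
        beta_reduce
        rw [dif_pos hxe]
        exact iso_maps_nbhd g hbase hedge k hk ⟨x, hxe⟩ hx
      · intro x hx y hy
        beta_reduce
        rw [dif_pos hx, dif_pos hy]
        exact hedge ⟨x, hx⟩ ⟨y, hy⟩
      · intro x hx t ht
        beta_reduce
        rw [dif_pos hx]
        exact hdec ⟨x, hx⟩ t ht
      · intro x hx
        beta_reduce
        rw [dif_pos hx]
        have hgx : (g ⟨x, hx⟩ : A) ∈ nbhd S (v i) (e i) := (g ⟨x, hx⟩).2
        beta_reduce
        rw [dif_pos hgx]
        have : (⟨(g ⟨x, hx⟩ : A), hgx⟩ : (nbhd S (v i) (e i) : Set A)) = g ⟨x, hx⟩ :=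
          Subtype.ext rfl
        rw [this, g.symm_apply_apply]
      · beta_reduce
        rw [dif_pos (mem_nbhd_self _ _ _)]
        exact hbase_s
      · intro k hk y hy
        have hye : y ∈ nbhd S (v i) (e i) := nbhd_mono _ _ hk hy
        beta_reduce
        rw [dif_pos hye]
        exact iso_maps_nbhd g.symm hbase_s hedge_s k hk ⟨y, hye⟩ hy
      · intro y hy
        beta_reduce
        rw [dif_pos hy]
        have hgy : (g.symm ⟨y, hy⟩ : A) ∈ nbhd S (u i) (e i) := (g.symm ⟨y, hy⟩).2
        beta_reduce
        rw [dif_pos hgy]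
        have : (⟨(g.symm ⟨y, hy⟩ : A), hgy⟩ : (nbhd S (u i) (e i) : Set A)) = g.symm ⟨y, hy⟩ :=
          Subtype.ext rfl
        rw [this, g.apply_symm_apply]
    · exact ⟨id, id, fun hmem => absurd hmem hi⟩
  choose φ ψ hP using H
  -- derived edge/decoration properties for ψ
  have Q3 : ∀ i ∈ G0, ∀ y ∈ nbhd S (v i) (e i), ∀ y' ∈ nbhd S (v i) (e i),
      (S y y' ↔ S (ψ i y) (ψ i y')) := by
    intro i hi y hy y' hy'
    obtain ⟨_, _, hp3, _, _, _, hp7, hp8⟩ := hP i hi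
    have h1 : ψ i y ∈ nbhd S (u i) (e i) := hp7 (e i) le_rfl y hy
    have h2 : ψ i y' ∈ nbhd S (u i) (e i) := hp7 (e i) le_rfl y' hy'
    have := hp3 (ψ i y) h1 (ψ i y') h2
    rw [hp8 y hy, hp8 y' hy'] at this
    exact this.symm
  have Q4 : ∀ i ∈ G0, ∀ y ∈ nbhd S (v i) (e i), ∀ t ∈ RInf R,
      (PRel R y t ↔ PRel R (ψ i y) t) ∧ (PRel R t y ↔ PRel R t (ψ i y)) := by
    intro i hi y hy t ht
    obtain ⟨_, _, _, hp4, _, _, hp7, hp8⟩ := hP i hi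
    have h1 : ψ i y ∈ nbhd S (u i) (e i) := hp7 (e i) le_rfl y hy
    have := hp4 (ψ i y) h1 t ht
    rw [hp8 y hy] at this
    exact ⟨this.1.symm, this.2.symm⟩
  -- pointwise lifted maps
  set Φ : (I → A) → (I → A) := fun c i => φ i (c i) with hΦ
  set Ψ : (I → A) → (I → A) := fun c i => ψ i (c i) with hΨ
  set mk : (I → A) → UP 𝒟 A := Quotient.mk (upSetoid 𝒟 A) with hmk
  have hcongr : ∀ (θ : ∀ i : I, A → A) (c c' : I → A), {i | c i = c' i} ∈ 𝒟 →
      {i | θ i (c i) = θ i (c' i)} ∈ 𝒟 := fun θ c c' h =>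
    Filter.mem_of_superset h fun i hi => by simp only [Set.mem_setOf_eq] at *; rw [hi]
  -- membership transfer
  have HΨ : ∀ c m, {i | c i ∈ nbhd S (v i) m} ∈ 𝒟 → {i | Ψ c i ∈ nbhd S (u i) m} ∈ 𝒟 := by
    intro c m hc
    refine Filter.mem_of_superset (Filter.inter_mem (hG m) hc) ?_
    rintro i ⟨⟨hi, hei⟩, hci⟩
    exact (hP i hi).2.2.2.2.2.2.1 m hei (c i) hci
  have HΦ : ∀ c m, {i | c i ∈ nbhd S (u i) m} ∈ 𝒟 → {i | Φ c i ∈ nbhd S (v i) m} ∈ 𝒟 := by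
    intro c m hc
    refine Filter.mem_of_superset (Filter.inter_mem (hG m) hc) ?_
    rintro i ⟨⟨hi, hei⟩, hci⟩
    exact (hP i hi).2.1 m hei (c i) hci
  have HΦΨ : ∀ c m, {i | c i ∈ nbhd S (v i) m} ∈ 𝒟 → {i | Φ (Ψ c) i = c i} ∈ 𝒟 := by
    intro c m hc
    refine Filter.mem_of_superset (Filter.inter_mem (hG m) hc) ?_
    rintro i ⟨⟨hi, hei⟩, hci⟩
    exact (hP i hi).2.2.2.2.2.2.2 (c i) (nbhd_mono _ _ hei hci)
  have HΨΦ : ∀ c m, {i | c i ∈ nbhd S (u i) m} ∈ 𝒟 → {i | Ψ (Φ c) i = c i} ∈ 𝒟 := by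
    intro c m hc
    refine Filter.mem_of_superset (Filter.inter_mem (hG m) hc) ?_
    rintro i ⟨⟨hi, hei⟩, hci⟩
    exact (hP i hi).2.2.2.2.1 (c i) (nbhd_mono _ _ hei hci)
  -- representatives
  have hrep : ∀ x : UP 𝒟 A, mk (Quotient.out x) = x := fun x => Quotient.out_eq x
  -- the underlying maps on the subtypes
  set SB := onbhd (upRel 𝒟 S) (mk v) with hSB
  set SC := onbhd (upRel 𝒟 S) (mk u) with hSC
  have memB : ∀ x : UP 𝒟 A, x ∈ SB → ∃ m, {i | (Quotient.out x) i ∈ nbhd S (v i) m} ∈ 𝒟 := by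
    intro x hx
    rw [← hrep x] at hx
    exact up_mem_onbhd_iff.1 hx
  have memC : ∀ x : UP 𝒟 A, x ∈ SC → ∃ m, {i | (Quotient.out x) i ∈ nbhd S (u i) m} ∈ 𝒟 := by
    intro x hx
    rw [← hrep x] at hx
    exact up_mem_onbhd_iff.1 hx
  have toMem : ∀ x : UP 𝒟 A, x ∈ SB → mk (Ψ (Quotient.out x)) ∈ SC := by
    intro x hx
    obtain ⟨m, hm⟩ := memB x hx
    exact up_mem_onbhd_iff.2 ⟨m, HΨ _ m hm⟩
  have invMem : ∀ y : UP 𝒟 A, y ∈ SC → mk (Φ (Quotient.out y)) ∈ SB := by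
    intro y hy
    obtain ⟨m, hm⟩ := memC y hy
    exact up_mem_onbhd_iff.2 ⟨m, HΦ _ m hm⟩
  refine ⟨⟨fun x => ⟨mk (Ψ (Quotient.out x.1)), toMem x.1 x.2⟩,
           fun y => ⟨mk (Φ (Quotient.out y.1)), invMem y.1 y.2⟩, ?_, ?_⟩, ?_, ?_, ?_⟩
  · -- left inverse
    rintro ⟨x, hx⟩
    apply Subtype.ext
    show mk (Φ (Quotient.out (mk (Ψ (Quotient.out x))))) = x
    obtain ⟨m, hm⟩ := memB x hx
    have h1 : {i | Quotient.out (mk (Ψ (Quotient.out x))) i = Ψ (Quotient.out x) i} ∈ 𝒟 :=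
      up_eq_iff'.1 (hrep (mk (Ψ (Quotient.out x))))
    have h2 : {i | Φ (Quotient.out (mk (Ψ (Quotient.out x)))) i = Φ (Ψ (Quotient.out x)) i} ∈ 𝒟 :=
      hcongr φ _ _ h1
    have h3 : {i | Φ (Ψ (Quotient.out x)) i = Quotient.out x i} ∈ 𝒟 := HΦΨ _ m hm
    have hfin : mk (Φ (Quotient.out (mk (Ψ (Quotient.out x))))) = mk (Quotient.out x) := by
      refine up_eq_iff'.2 (Filter.mem_of_superset (Filter.inter_mem h2 h3) ?_)
      rintro i ⟨hi2, hi3⟩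
      exact hi2.trans hi3
    exact hfin.trans (hrep x)
  · -- right inverse
    rintro ⟨y, hy⟩
    apply Subtype.ext
    show mk (Ψ (Quotient.out (mk (Φ (Quotient.out y))))) = y
    obtain ⟨m, hm⟩ := memC y hy
    have h1 : {i | Quotient.out (mk (Φ (Quotient.out y))) i = Φ (Quotient.out y) i} ∈ 𝒟 :=
      up_eq_iff'.1 (hrep (mk (Φ (Quotient.out y))))
    have h2 : {i | Ψ (Quotient.out (mk (Φ (Quotient.out y)))) i = Ψ (Φ (Quotient.out y)) i} ∈ 𝒟 :=
      hcongr ψ _ _ h1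
    have h3 : {i | Ψ (Φ (Quotient.out y)) i = Quotient.out y i} ∈ 𝒟 := HΨΦ _ m hm
    have hfin : mk (Ψ (Quotient.out (mk (Φ (Quotient.out y))))) = mk (Quotient.out y) := by
      refine up_eq_iff'.2 (Filter.mem_of_superset (Filter.inter_mem h2 h3) ?_)
      rintro i ⟨hi2, hi3⟩
      exact hi2.trans hi3
    exact hfin.trans (hrep y)
  · -- basepoint
    intro hb hc
    apply Subtype.ext
    show mk (Ψ (Quotient.out (mk v))) = mk u
    have h1 : {i | Quotient.out (mk v) i = v i} ∈ 𝒟 := up_eq_iff'.1 (hrep (mk v))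
    have h2 : {i | Ψ (Quotient.out (mk v)) i = Ψ v i} ∈ 𝒟 := hcongr ψ _ _ h1
    have h3 : {i | Ψ v i = u i} ∈ 𝒟 := by
      refine Filter.mem_of_superset (hG 0) ?_
      rintro i ⟨hi, _⟩
      exact (hP i hi).2.2.2.2.2.1
    refine up_eq_iff'.2 (Filter.mem_of_superset (Filter.inter_mem h2 h3) ?_)
    rintro i ⟨hi2, hi3⟩
    exact hi2.trans hi3
  · -- edges
    rintro ⟨x, hx⟩ ⟨y, hy⟩
    obtain ⟨m1, hm1⟩ := memB x hx
    obtain ⟨m2, hm2⟩ := memB y hy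
    set cx := Quotient.out x
    set cy := Quotient.out y
    set m := max m1 m2
    have hmx : {i | cx i ∈ nbhd S (v i) m} ∈ 𝒟 :=
      Filter.mem_of_superset hm1 fun i hi => nbhd_mono _ _ (le_max_left _ _) hi
    have hmy : {i | cy i ∈ nbhd S (v i) m} ∈ 𝒟 :=
      Filter.mem_of_superset hm2 fun i hi => nbhd_mono _ _ (le_max_right _ _) hi
    show upRel 𝒟 S x y ↔ upRel 𝒟 S (mk (Ψ cx)) (mk (Ψ cy))
    rw [← hrep x, ← hrep y]
    constructor
    · intro hxy
      have hxy' : {i | S (cx i) (cy i)} ∈ 𝒟 := hxy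
      refine (Filter.mem_of_superset
        (Filter.inter_mem (Filter.inter_mem (hG m) (Filter.inter_mem hmx hmy)) hxy') ?_ :
        {i | S (Ψ cx i) (Ψ cy i)} ∈ 𝒟)
      rintro i ⟨⟨⟨hi, hei⟩, ⟨hix, hiy⟩⟩, hsxy⟩
      exact (Q3 i hi (cx i) (nbhd_mono _ _ hei hix) (cy i) (nbhd_mono _ _ hei hiy)).1 hsxy
    · intro hxy
      have hxy' : {i | S (Ψ cx i) (Ψ cy i)} ∈ 𝒟 := hxy
      refine (Filter.mem_of_superset
        (Filter.inter_mem (Filter.inter_mem (hG m) (Filter.inter_mem hmx hmy)) hxy') ?_ :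
        {i | S (cx i) (cy i)} ∈ 𝒟)
      rintro i ⟨⟨⟨hi, hei⟩, ⟨hix, hiy⟩⟩, hsxy⟩
      exact (Q3 i hi (cx i) (nbhd_mono _ _ hei hix) (cy i) (nbhd_mono _ _ hei hiy)).2 hsxy
  · -- decorations
    rintro ⟨x, hx⟩ t ht
    obtain ⟨m, hm⟩ := memB x hx
    set cx := Quotient.out x
    constructor
    · show upRel 𝒟 (PRel R) x (diag 𝒟 t) ↔ upRel 𝒟 (PRel R) (mk (Ψ cx)) (diag 𝒟 t)
      rw [← hrep x]
      constructor
      · intro hpt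
        have hpt' : {i | PRel R (cx i) t} ∈ 𝒟 := hpt
        refine (Filter.mem_of_superset
          (Filter.inter_mem (Filter.inter_mem (hG m) hm) hpt') ?_ :
          {i | PRel R (Ψ cx i) t} ∈ 𝒟)
        rintro i ⟨⟨⟨hi, hei⟩, hix⟩, hp⟩
        exact ((Q4 i hi (cx i) (nbhd_mono _ _ hei hix) t ht).1).1 hp
      · intro hpt
        have hpt' : {i | PRel R (Ψ cx i) t} ∈ 𝒟 := hpt
        refine (Filter.mem_of_superset
          (Filter.inter_mem (Filter.inter_mem (hG m) hm) hpt') ?_ :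
          {i | PRel R (cx i) t} ∈ 𝒟)
        rintro i ⟨⟨⟨hi, hei⟩, hix⟩, hp⟩
        exact ((Q4 i hi (cx i) (nbhd_mono _ _ hei hix) t ht).1).2 hp
    · show upRel 𝒟 (PRel R) (diag 𝒟 t) x ↔ upRel 𝒟 (PRel R) (diag 𝒟 t) (mk (Ψ cx))
      rw [← hrep x]
      constructor
      · intro hpt
        have hpt' : {i | PRel R t (cx i)} ∈ 𝒟 := hpt
        refine (Filter.mem_of_superset
          (Filter.inter_mem (Filter.inter_mem (hG m) hm) hpt') ?_ :
          {i | PRel R t (Ψ cx i)} ∈ 𝒟)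
        rintro i ⟨⟨⟨hi, hei⟩, hix⟩, hp⟩
        exact ((Q4 i hi (cx i) (nbhd_mono _ _ hei hix) t ht).2).1 hp
      · intro hpt
        have hpt' : {i | PRel R t (Ψ cx i)} ∈ 𝒟 := hpt
        refine (Filter.mem_of_superset
          (Filter.inter_mem (Filter.inter_mem (hG m) hm) hpt') ?_ :
          {i | PRel R t (cx i)} ∈ 𝒟)
        rintro i ⟨⟨⟨hi, hei⟩, hix⟩, hp⟩
        exact ((Q4 i hi (cx i) (nbhd_mono _ _ hei hix) t ht).2).2 hp

end Aux6

/-- For each non-diagonal `[a]` in a `κ`-regular ultrapower there are at least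
`2^κ`-many elements whose ω-neighborhoods are `P`-isomorphic to that of `[a]` and
pairwise distinct. -/
theorem lemma26_iii {A I : Type u} [Infinite I] (R : A → A → Prop) (h : AlmostBounded R)
    (κ : Cardinal) (hκ : ℵ₀ ≤ κ) (𝒟 : Ultrafilter I) (hreg : IsRegular 𝒟 κ)
    (a : UP 𝒟 A) (ha : a ∉ Set.range (diag 𝒟 : A → UP 𝒟 A)) :
    ∃ B : Set (UP 𝒟 A),
      2 ^ κ ≤ #B ∧
      (∀ b ∈ B, PIsoUpUp R 𝒟 (onbhd (upRel 𝒟 (SRel R)) b) (onbhd (upRel 𝒟 (SRel R)) a) b a) ∧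
      (∀ b ∈ B, ∀ b' ∈ B, b ≠ b' →
        onbhd (upRel 𝒟 (SRel R)) b ≠ onbhd (upRel 𝒟 (SRel R)) b') := by
  classical
  obtain ⟨hRfin, n, hn⟩ := h
  obtain ⟨E, hE𝒟, hEcard, hEfin⟩ := hreg
  obtain ⟨av, hav⟩ := Quotient.exists_rep a
  have ha' : Quotient.mk (upSetoid 𝒟 A) av ∉ Set.range (diag 𝒟 : A → UP 𝒟 A) := by
    rw [hav]; exact ha
  set S := SRel R with hS
  set mk : (I → A) → UP 𝒟 A := Quotient.mk (upSetoid 𝒟 A) with hmk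
  set Ei : I → Set (Set I) := fun i => {X ∈ E | i ∈ X} with hEi
  -- the "good supply" predicate
  set Good : I → ℕ → Prop := fun i m =>
    ∃ f : Set (Ei i : Set (Set I)) → A, (∀ s, NIso R m (av i) (f s)) ∧
      ∀ s s', s ≠ s' → f s' ∉ nbhd S (f s) m with hGood
  -- the set of indices where the regular family is large
  have hInf : Infinite ↥E := by
    rw [Cardinal.infinite_iff, hEcard]; exact hκ
  have hY : ∀ m : ℕ, {i | m ≤ (Ei i).ncard} ∈ 𝒟 := by
    intro m
    have emb := Infinite.natEmbedding ↥E
    have hint : (⋂ j : Fin m, ((emb j : ↥E) : Set I)) ∈ 𝒟 :=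
      Filter.iInter_mem.2 fun j => hE𝒟 _ (emb j : ↥E).2
    refine Filter.mem_of_superset hint ?_
    intro i hi
    have hmem : ∀ j : Fin m, ((emb j : ↥E) : Set I) ∈ Ei i := by
      intro j
      exact ⟨(emb j : ↥E).2, Set.mem_iInter.1 hi j⟩
    have hinj : Function.Injective (fun j : Fin m => ((emb (j : ℕ) : ↥E) : Set I)) := by
      intro j j' hjj
      have : emb (j : ℕ) = emb (j' : ℕ) := Subtype.ext hjj
      exact Fin.ext (emb.injective this)
    calc m = ((fun j : Fin m => ((emb (j : ℕ) : ↥E) : Set I)) '' Set.univ).ncard := by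
          rw [Set.ncard_image_of_injective _ hinj, Set.ncard_univ, Nat.card_eq_fintype_card,
            Fintype.card_fin]
      _ ≤ (Ei i).ncard := by
          apply Set.ncard_le_ncard _ (hEfin i)
          rintro _ ⟨j, _, rfl⟩
          exact hmem j
  -- good levels are 𝒟-large
  have hGoodm : ∀ m : ℕ, {i | Good i m} ∈ 𝒟 := by
    intro m
    obtain ⟨X, hX𝒟, hXiso⟩ := exists_ae_niso hn hRfin 𝒟 av m
    refine Filter.mem_of_superset hX𝒟 ?_
    intro i hi
    have hW : (av '' X).Infinite := nondiag_infinite ha' hX𝒟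
    letI : Finite ↥(Ei i) := (hEfin i).to_subtype
    obtain ⟨nn, ⟨eqv⟩⟩ := Finite.exists_equiv_fin (Set (Ei i : Set (Set I)))
    obtain ⟨f, hfW, hfsep⟩ :=
      exists_separated (fun w => (nbhd_finite_card hn w m).1) hW nn
    refine ⟨fun s => f (eqv s), ?_, ?_⟩
    · intro s
      obtain ⟨j, hj, hje⟩ := hfW (eqv s)
      show NIso R m (av i) (f (eqv s))
      rw [← hje]
      exact hXiso i hi j hj
    · intro s s' hss
      exact hfsep (eqv s) (eqv s') (fun hE => hss (eqv.injective hE))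
  set e : I → ℕ := fun i => Nat.findGreatest (Good i) ((Ei i).ncard) with he
  set G0 : Set I := {i | Good i (e i)} with hG0
  have hGm : ∀ m : ℕ, {i | i ∈ G0 ∧ m ≤ e i} ∈ 𝒟 := by
    intro m
    refine Filter.mem_of_superset (Filter.inter_mem (hGoodm m) (hY m)) ?_
    rintro i ⟨hgood, hcap⟩
    refine ⟨?_, Nat.le_findGreatest hcap hgood⟩
    show Good i (e i)
    exact Nat.findGreatest_spec hcap hgood
  -- choose the supplies
  have hsupex : ∀ i, ∃ f : Set (Ei i : Set (Set I)) → A, i ∈ G0 →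
      (∀ s, NIso R (e i) (av i) (f s)) ∧
      ∀ s s', s ≠ s' → f s' ∉ nbhd S (f s) (e i) := by
    intro i
    by_cases hi : i ∈ G0
    · obtain ⟨f, h1, h2⟩ := hi
      exact ⟨f, fun _ => ⟨h1, h2⟩⟩
    · exact ⟨fun _ => av i, fun hmem => absurd hmem hi⟩
  choose fsup hsup using hsupex
  -- the family
  set bfun : Set ↥E → I → A := fun G i =>
    fsup i {X : (Ei i : Set (Set I)) | (⟨X.1, X.2.1⟩ : ↥E) ∈ G} with hbfun
  have hbiso : ∀ G : Set ↥E, ∀ i ∈ G0, NIso R (e i) (av i) (bfun G i) := by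
    intro G i hi
    exact (hsup i hi).1 _
  -- separation in the ultrapower
  have hsepUP : ∀ G G' : Set ↥E, G ≠ G' →
      mk (bfun G') ∉ onbhd (upRel 𝒟 S) (mk (bfun G)) := by
    intro G G' hGG hmem
    obtain ⟨m, hm⟩ := up_mem_onbhd_iff.1 hmem
    have hXd : ∃ Xd : ↥E, ¬((Xd ∈ G) ↔ (Xd ∈ G')) := by
      by_contra hall
      push_neg at hall
      exact hGG (Set.ext fun X => hall X)
    obtain ⟨Xd, hXd⟩ := hXd
    have hZ : (Xd : Set I) ∈ 𝒟 := hE𝒟 _ Xd.2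
    have hbig : {i | bfun G' i ∈ nbhd S (bfun G i) m} ∩
        ((Xd : Set I) ∩ {i | i ∈ G0 ∧ m ≤ e i}) ∈ 𝒟 :=
      Filter.inter_mem hm (Filter.inter_mem hZ (hGm m))
    obtain ⟨i, hmi, hXdi, hiG0, hie⟩ := Filter.nonempty_of_mem hbig
    have hXhat : (Xd : Set I) ∈ Ei i := ⟨Xd.2, hXdi⟩
    have hne : {X : (Ei i : Set (Set I)) | (⟨X.1, X.2.1⟩ : ↥E) ∈ G} ≠
        {X : (Ei i : Set (Set I)) | (⟨X.1, X.2.1⟩ : ↥E) ∈ G'} := by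
      intro heq
      apply hXd
      have := Set.ext_iff.1 heq ⟨(Xd : Set I), hXhat⟩
      simpa using this
    have hsep := (hsup i hiG0).2 _ _ hne
    exact hsep (nbhd_mono _ _ hie hmi)
  -- injectivity
  have hinjb : Function.Injective (fun G : Set ↥E => mk (bfun G)) := by
    intro G G' hGG
    by_contra hne
    apply hsepUP G G' hne
    have hGG' : mk (bfun G) = mk (bfun G') := hGG
    rw [hGG']
    exact mem_onbhd_self _ _
  refine ⟨Set.range (fun G : Set ↥E => mk (bfun G)), ?_, ?_, ?_⟩
  · rw [Cardinal.mk_range_eq _ hinjb, Cardinal.mk_set, hEcard]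
  · rintro b ⟨G, rfl⟩
    rw [← hav]
    exact piso_of_pointwise R 𝒟 av (bfun G) e G0 hGm (hbiso G)
  · rintro b ⟨G, rfl⟩ b' ⟨G', rfl⟩ hbb heq
    have hGG : G ≠ G' := fun hEE => hbb (by rw [hEE])
    apply hsepUP G G' hGG
    have heq' : onbhd (upRel 𝒟 S) (mk (bfun G)) = onbhd (upRel 𝒟 S) (mk (bfun G')) := heq
    rw [heq']
    exact mem_onbhd_self _ _

end UEx
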